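/- For a finite simple graph Γ, the rank of the center of the right-angled Artin group A_Γ equals the number of vertices of Γ adjacent to all other vertices; equivalently, the center of A_Γ is the special subgroup generated by the vertices v with st(v) = Γ. -/

import Mathlib

/-!
The map `w ↦ t`, `v ↦ v` embeds `A_Γ` as a retract of the HNN extension of `A_Γ` along the
identity of the special subgroup on the link of `w`. Comparing reduced words of `t z` and `z t`
shows that an element `z` commuting with `t` is `a t ^ n` with `a` in that subgroup; hence the
centralizer of `w` lies in the special subgroup on the star of `w`. Retractions `v ↦ 1` for
`v ∉ T` show that special subgroups intersect as their vertex sets do, so a central element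
lies in the special subgroup on the intersection of all stars, i.e. on the central vertices.
These commute pairwise, and the abelianisation detects each of them independently, so they
generate a free abelian group on themselves.
-/

/-- The defining relations of a right-angled Artin group: commutators of adjacent vertices. -/
def raagRels {V : Type} (Γ : SimpleGraph V) : Set (FreeGroup V) :=
  {r | ∃ u w : V, Γ.Adj u w ∧
    r = FreeGroup.of u * FreeGroup.of w * (FreeGroup.of u)⁻¹ * (FreeGroup.of w)⁻¹}

/-- The right-angled Artin group on the graph `Γ`. -/
abbrev RAAG {V : Type} (Γ : SimpleGraph V) : Type := PresentedGroup (raagRels Γ)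

namespace HNNExtension

open NormalWord

variable {G : Type*} [Group G] {A : Subgroup G}

theorem toSubgroup_self (u : ℤˣ) : toSubgroup A A u = A := by
  rcases Int.units_eq_one_or u with rfl | rfl <;> rfl

theorem commute_t_of_mem {a : G} (ha : a ∈ A) :
    Commute (t : HNNExtension G A A (MulEquiv.refl A)) (of a) :=
  t_mul_of (φ := MulEquiv.refl A) ⟨a, ha⟩

theorem NormalWord.ReducedWord.head_mem_of_commute_t (w : ReducedWord G A A)
    (hw : Commute t (w.prod (MulEquiv.refl A))) : w.head ∈ A := by
  -- If `w.head ∉ A`, then `w₁` and `w₂` below are reduced words for `t ^ ε * w.prod` and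
  -- `w.prod * t ^ ε` (`ε` matching the last letter of `w`), and comparing their heads gives
  -- `w.head ∈ A` after all.
  by_contra hhead
  obtain ⟨ε, hε⟩ : ∃ ε : ℤˣ, ∀ x ∈ w.toList.getLast?, x.1 = ε := by
    cases w.toList.getLast? with
    | none => exact ⟨1, by simp⟩
    | some x => exact ⟨x.1, by simp⟩
  let w₁ : ReducedWord G A A :=
    ⟨1, (ε, w.head) :: w.toList, List.isChain_cons.2
      ⟨fun _ _ h => absurd h (by rwa [toSubgroup_self]), w.chain⟩⟩
  let w₂ : ReducedWord G A A :=
    ⟨w.head, w.toList ++ [(ε, 1)], List.isChain_append.2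
      ⟨w.chain, List.isChain_singleton _, fun x hx y hy _ => by
        obtain rfl : (ε, 1) = y := Option.mem_some_iff.1 hy
        exact hε x hx⟩⟩
  have hprod : w₁.prod (MulEquiv.refl A) = w₂.prod (MulEquiv.refl A) := by
    simpa [w₁, w₂, ReducedWord.prod, mul_assoc] using (hw.zpow_left (ε : ℤ)).eq
  have hhead_mem := (ReducedWord.map_fst_eq_and_of_prod_eq _ hprod).2 ε (by simp [w₁])
  exact hhead (by simpa [w₁, w₂, toSubgroup_self] using hhead_mem)

theorem NormalWord.ReducedWord.exists_prod_eq_of_commute_t (w : ReducedWord G A A)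
    (hw : Commute t (w.prod (MulEquiv.refl A))) :
    ∃ a ∈ A, ∃ n : ℤ, w.prod (MulEquiv.refl A) = of a * t ^ n := by
  obtain ⟨h, l, hl⟩ := w
  induction l generalizing h with
  | nil => exact ⟨h, head_mem_of_commute_t _ hw, 0, by simp [ReducedWord.prod]⟩
  | cons x l ih =>
    have hh : h ∈ A := head_mem_of_commute_t _ hw
    let w' : ReducedWord G A A := ⟨x.2, l, (List.isChain_cons.1 hl).2⟩
    have hprod : ReducedWord.prod (MulEquiv.refl A) ⟨h, x :: l, hl⟩ =
        of h * t ^ (x.1 : ℤ) * w'.prod (MulEquiv.refl A) := by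
      simp [w', ReducedWord.prod, mul_assoc]
    have hw' : Commute t (w'.prod (MulEquiv.refl A)) := by
      have hcomm : Commute t (of h * t ^ (x.1 : ℤ)) :=
        (commute_t_of_mem hh).mul_right ((Commute.refl t).zpow_right _)
      rw [hprod, mul_assoc] at hw
      simpa using hcomm.inv_right.mul_right hw
    obtain ⟨a, ha, n, hn⟩ := ih x.2 w'.chain hw'
    refine ⟨h * a, mul_mem hh ha, x.1 + n, ?_⟩
    rw [hprod, hn, ← mul_assoc, mul_assoc (of h), ((commute_t_of_mem ha).zpow_left _).eq,
      zpow_add]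
    simp [mul_assoc]

theorem exists_eq_of_mul_t_zpow_of_commute_t {z : HNNExtension G A A (MulEquiv.refl A)}
    (hz : Commute t z) :
    ∃ a ∈ A, ∃ n : ℤ, z = of a * t ^ n := by
  obtain ⟨d⟩ := TransversalPair.nonempty G A A
  rw [← (equiv (MulEquiv.refl A) d).symm_apply_apply z] at hz ⊢
  exact ReducedWord.exists_prod_eq_of_commute_t _ hz

end HNNExtension

theorem Subgroup.nonempty_closure_range_mulEquiv_pi {G ι : Type*} [Group G] [Fintype ι]
    [DecidableEq ι] {f : ι → G} (hf : Pairwise fun i j => Commute (f i) (f j))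
    (π : G →* (ι → Multiplicative ℤ)) (hπ : ∀ i, π (f i) = Pi.mulSingle i (.ofAdd 1)) :
    Nonempty (closure (Set.range f) ≃* (ι → Multiplicative ℤ)) := by
  let j := MonoidHom.noncommPiCoprod (fun i => zpowersHom G (f i))
    (hf.mono fun _ _ h _ _ => h.zpow_zpow _ _)
  have hπj : π.comp j = MonoidHom.id _ :=
    MonoidHom.functions_ext' _ _ _ fun i => MonoidHom.ext_mint <| by simp [j, hπ]
  have hrange : j.range = closure (Set.range f) := by
    rw [MonoidHom.noncommPiCoprod_range]
    simp_rw [range_zpowersHom, zpowers_eq_closure]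
    rw [← Subgroup.closure_iUnion, Set.iUnion_singleton_eq_range]
  have hj : Function.Injective j :=
    Function.LeftInverse.injective (g := π) fun x => DFunLike.congr_fun hπj x
  exact ⟨(MulEquiv.subgroupCongr hrange).symm.trans (MonoidHom.ofInjective hj).symm⟩

namespace RAAG

open PresentedGroup

variable {V : Type} {Γ : SimpleGraph V}

def lift {G : Type*} [Group G] (f : V → G) (hf : ∀ u w, Γ.Adj u w → Commute (f u) (f w)) :
    RAAG Γ →* G :=
  toGroup (f := f) <| by
    rintro _ ⟨u, w, huw, rfl⟩
    simp [(hf u w huw).eq]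

@[simp]
theorem lift_of {G : Type*} [Group G] (f : V → G) (hf : ∀ u w, Γ.Adj u w → Commute (f u) (f w))
    (v : V) : lift f hf (of v) = f v :=
  toGroup.of _

theorem commute_of_adj {u w : V} (h : Γ.Adj u w) : Commute (of u : RAAG Γ) (of w) := by
  rw [← commutatorElement_eq_one_iff_commute, commutatorElement_def]
  exact (QuotientGroup.eq_one_iff _).2 (Subgroup.subset_normalClosure ⟨u, w, h, rfl⟩)

open Classical in
noncomputable def retract (T : Set V) : RAAG Γ →* RAAG Γ :=
  lift (fun v => if v ∈ T then of v else 1) fun u w h => by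
    split_ifs <;> simp [commute_of_adj h]

theorem retract_of (T : Set V) (v : V) [Decidable (v ∈ T)] :
    retract T (of v : RAAG Γ) = if v ∈ T then of v else 1 := by
  simp only [retract, lift_of]; congr

theorem retract_eq_self {T : Set V} {g : RAAG Γ} (hg : g ∈ Subgroup.closure (of '' T)) :
    retract T g = g := by
  classical
  induction hg using Subgroup.closure_induction with
  | mem x hx => obtain ⟨v, hv, rfl⟩ := hx; simp [retract_of, hv]
  | one => simp
  | mul x y _ _ hx hy => simp [hx, hy]
  | inv x _ hx => simp [hx]

theorem retract_mem_closure {S : Set V} (T : Set V) {g : RAAG Γ}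
    (hg : g ∈ Subgroup.closure (of '' S)) :
    retract T g ∈ Subgroup.closure (of '' (S ∩ T)) := by
  classical
  rw [← Subgroup.mem_comap]
  refine Subgroup.closure_le _ |>.2 ?_ hg
  rintro _ ⟨v, hv, rfl⟩
  rw [SetLike.mem_coe, Subgroup.mem_comap, retract_of]
  split_ifs with hvT
  · exact Subgroup.subset_closure ⟨v, ⟨hv, hvT⟩, rfl⟩
  · exact one_mem _

theorem mem_closure_iInter {ι : Type*} [Finite ι] {T : ι → Set V} {g : RAAG Γ}
    (hg : ∀ i, g ∈ Subgroup.closure (of '' T i)) :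
    g ∈ Subgroup.closure (of '' ⋂ i, T i) := by
  classical
  cases nonempty_fintype ι
  suffices ∀ s : Finset ι, g ∈ Subgroup.closure (of '' ⋂ i ∈ s, T i) by
    simpa using this Finset.univ
  intro s
  induction s using Finset.induction_on with
  | empty => simp [closure_range_of]
  | insert i s _ ih =>
    rw [Finset.set_biInter_insert, Set.inter_comm, ← retract_eq_self (hg i)]
    exact retract_mem_closure _ ih

theorem centralizer_le_closure_star (w : V) :
    Subgroup.centralizer {(of w : RAAG Γ)} ≤
      Subgroup.closure (of '' insert w (Γ.neighborSet w)) := by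
  classical
  intro g hg
  set A : Subgroup (RAAG Γ) := Subgroup.closure (of '' Γ.neighborSet w)
  have hA : A ≤ Subgroup.centralizer {of w} := by
    refine Subgroup.closure_le _ |>.2 ?_
    rintro _ ⟨v, hv, rfl⟩
    exact Subgroup.mem_centralizer_singleton_iff.2 (commute_of_adj hv).eq.symm
  let Ψ : HNNExtension (RAAG Γ) A A (MulEquiv.refl A) →* RAAG Γ :=
    HNNExtension.lift (MonoidHom.id _) (of w) fun a =>
      (Subgroup.mem_centralizer_singleton_iff.1 (hA a.2)).symm
  let Φ : RAAG Γ →* HNNExtension (RAAG Γ) A A (MulEquiv.refl A) :=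
    lift (fun v => if v = w then .t else .of (of v)) fun u v huv => by
      have hne := Γ.ne_of_adj huv
      split_ifs with hu hv hv
      · exact absurd (hu.trans hv.symm) hne
      · subst hu
        exact HNNExtension.commute_t_of_mem (Subgroup.subset_closure (Set.mem_image_of_mem of huv))
      · subst hv
        exact (HNNExtension.commute_t_of_mem
          (Subgroup.subset_closure (Set.mem_image_of_mem of huv.symm))).symm
      · exact (commute_of_adj huv).map HNNExtension.of
  have hΦw : Φ (of w) = .t := by simp [Φ]
  have hΨt : Ψ .t = of w := HNNExtension.lift_t _ _ _
  have hΨof (x : RAAG Γ) : Ψ (.of x) = x := HNNExtension.lift_of _ _ _ x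
  have hΨΦ (x : RAAG Γ) : Ψ (Φ x) = x := by
    refine DFunLike.congr_fun (f := Ψ.comp Φ) (g := MonoidHom.id _)
      (PresentedGroup.ext fun v => ?_) x
    by_cases hv : v = w
    · subst hv; simp [Φ, hΨt]
    · simp [Φ, hv, hΨof]
  have hcomm : Commute (.t) (Φ g) := by
    rw [← hΦw]
    exact (show Commute (of w) g from (Subgroup.mem_centralizer_singleton_iff.1 hg).symm).map Φ
  obtain ⟨a, ha, n, hn⟩ := HNNExtension.exists_eq_of_mul_t_zpow_of_commute_t hcomm
  have hg : g = a * of w ^ n := by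
    simpa [hΨΦ, hΨof, hΨt] using congrArg Ψ hn
  rw [hg]
  exact mul_mem (Subgroup.closure_mono (Set.image_mono (Set.subset_insert _ _)) ha)
    (zpow_mem (Subgroup.subset_closure (Set.mem_image_of_mem of (Set.mem_insert _ _))) n)

theorem of_mem_center {v : V} (hv : ∀ w, w ≠ v → Γ.Adj v w) :
    (of v : RAAG Γ) ∈ Subgroup.center (RAAG Γ) := by
  have : Subgroup.closure (Set.range of) ≤ Subgroup.centralizer {(of v : RAAG Γ)} := by
    refine Subgroup.closure_le _ |>.2 ?_
    rintro _ ⟨u, rfl⟩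
    rw [SetLike.mem_coe, Subgroup.mem_centralizer_singleton_iff]
    by_cases hu : u = v
    · rw [hu]
    · exact (commute_of_adj (hv u hu)).eq.symm
  rw [closure_range_of] at this
  exact Subgroup.mem_center_iff.2 fun x => Subgroup.mem_centralizer_singleton_iff.1 (this trivial)

theorem center_eq_closure [Finite V] :
    Subgroup.center (RAAG Γ) = Subgroup.closure (of '' {v | ∀ w, w ≠ v → Γ.Adj v w}) := by
  refine le_antisymm (fun g hg => ?_) (Subgroup.closure_le _ |>.2 ?_)
  · have hstar (w : V) : g ∈ Subgroup.closure (of '' insert w (Γ.neighborSet w)) :=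
      centralizer_le_closure_star w <| Subgroup.mem_centralizer_singleton_iff.2 <|
        (Subgroup.mem_center_iff.1 hg (of w)).symm
    have hcap : ⋂ w, insert w (Γ.neighborSet w) = {v | ∀ w, w ≠ v → Γ.Adj v w} := by
      ext v
      simp [or_iff_not_imp_left, eq_comm, SimpleGraph.adj_comm]
    simpa [hcap] using mem_closure_iInter hstar
  · rintro _ ⟨v, hv, rfl⟩
    exact of_mem_center hv

theorem nonempty_center_mulEquiv_pi [Finite V] :
    Nonempty (Subgroup.center (RAAG Γ) ≃*
      ({v // ∀ w, w ≠ v → Γ.Adj v w} → Multiplicative ℤ)) := by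
  classical
  cases nonempty_fintype V
  let π : RAAG Γ →* ({v // ∀ w, w ≠ v → Γ.Adj v w} → Multiplicative ℤ) :=
    lift (fun v => if h : ∀ w, w ≠ v → Γ.Adj v w then Pi.mulSingle ⟨v, h⟩ (.ofAdd 1) else 1)
      fun _ _ _ => Commute.all _ _
  obtain ⟨e⟩ := Subgroup.nonempty_closure_range_mulEquiv_pi
    (f := fun v : {v // ∀ w, w ≠ v → Γ.Adj v w} => (of v.1 : RAAG Γ))
    (fun u v huv => commute_of_adj (u.2 v.1 fun h => huv (Subtype.ext h.symm))) π
    fun v => by simp [π, dif_pos v.2]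
  rw [center_eq_closure, Set.image_eq_range]
  exact ⟨e⟩

end RAAG

/-- The center of the RAAG `A_Γ` on a finite simple graph is the special subgroup
generated by the vertices adjacent to all other vertices, and it is free abelian of
rank `z(Γ)`, the number of such vertices. -/
theorem stmt4 {V : Type} [Fintype V] [DecidableEq V] (Γ : SimpleGraph V)
    [DecidableRel Γ.Adj] :
    Subgroup.center (RAAG Γ) =
      Subgroup.closure
        ((fun v : V => (PresentedGroup.of v : RAAG Γ)) ''
          {v : V | ∀ w : V, w ≠ v → Γ.Adj v w}) ∧
    Nonempty ((Subgroup.center (RAAG Γ)) ≃*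
      Multiplicative (Fin (Fintype.card {v : V // ∀ w : V, w ≠ v → Γ.Adj v w}) → ℤ)) := by
  obtain ⟨e⟩ := RAAG.nonempty_center_mulEquiv_pi (Γ := Γ)
  exact ⟨RAAG.center_eq_closure, ⟨e.trans <| (MulEquiv.arrowCongr (Fintype.equivFin _)
    (MulEquiv.refl _)).trans (MulEquiv.piMultiplicative fun _ => ℤ).symm⟩⟩
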